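/- arXiv:0812.2111 — 3 statements merged into one kernel-verified Lean document; each statement's English description precedes it below -/
import Mathlib

section
/- If Γ is a closed subgroup of ℝⁿ isomorphic to ℝᵖ × ℤ^q, then its dual Γ* = {y ∈ ℝⁿ : ∀ x ∈ Γ, x·y ∈ ℤ} is isomorphic to ℝ^{n-(p+q)} × ℤ^q. -/
noncomputable section

abbrev Euc (n : ℕ) := EuclideanSpace ℝ (Fin n)

/-! A continuous additive map between real vector spaces is `ℝ`-linear, so the image `V` of
`ℝᵖ × 0` is a `p`-dimensional subspace contained in `Γ`; it is open in `Γ`, so `Γ ∩ V⊥` is discrete.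
Projecting to `V⊥` the images of the standard generators of `ℤ^q` gives vectors `b₁, …, b_q`
with `Γ = V + ℤb₁ + ⋯ + ℤb_q`; they are `ℤ`-independent, and discreteness makes them
`ℝ`-independent. Hence `Γ* = {y ∈ V⊥ | ⟪bᵢ, y⟫ ∈ ℤ}`, and a linear section `ℝ^q → span b` of
`y ↦ (⟪bᵢ, y⟫)ᵢ` splits `Γ*` as `(V ⊕ span b)⊥ × ℤ^q`, whose first factor has dimension
`n - (p + q)`. -/

open Submodule Module

section RightInverse

variable {E : Type*} [AddCommGroup E] [Module ℝ E] [TopologicalSpace E] [IsTopologicalAddGroup E]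
  {ι : Type*}

theorem exists_addEquiv_prod_int_of_rightInverse (W : Submodule ℝ E) (β : E →L[ℝ] (ι → ℝ))
    (s : (ι → ℝ) →L[ℝ] E) (hβs : ∀ c, β (s c) = c) (hsW : ∀ c, s c ∈ W) (Δ : AddSubgroup E)
    (hΔ : ∀ y, y ∈ Δ ↔ y ∈ W ∧ ∀ i, ∃ m : ℤ, β y i = m) :
    ∃ e : Δ ≃+ ((W ⊓ β.ker : Submodule ℝ E) × (ι → ℤ)),
      Continuous e ∧ Continuous e.symm := by
  have hfloor (y : Δ) (i : ι) : (⌊β y i⌋ : ℝ) = β y i := by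
    obtain ⟨m, hm⟩ := ((hΔ y).1 y.2).2 i
    rw [hm, Int.floor_intCast]
  have hβk (k : (W ⊓ β.ker : Submodule ℝ E)) : β k = 0 := k.2.2
  let toFun (y : Δ) : (W ⊓ β.ker : Submodule ℝ E) × (ι → ℤ) :=
    (⟨y - s (β y), sub_mem ((hΔ y).1 y.2).1 (hsW _), by simp [hβs]⟩, fun i => ⌊β y i⌋)
  let invFun (km : (W ⊓ β.ker : Submodule ℝ E) × (ι → ℤ)) : Δ :=
    ⟨km.1 + s (Int.cast ∘ km.2), by
      refine (hΔ _).2 ⟨W.add_mem km.1.2.1 (hsW _), fun i => ⟨km.2 i, ?_⟩⟩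
      simp [hβk, hβs]⟩
  let e : Δ ≃+ ((W ⊓ β.ker : Submodule ℝ E) × (ι → ℤ)) :=
    { toFun, invFun
      left_inv y := by
        ext1
        simp only [toFun, invFun]
        rw [show (Int.cast ∘ fun i => ⌊β y i⌋ : ι → ℝ) = β y from funext (hfloor y)]
        exact sub_add_cancel _ _
      right_inv km := by
        ext1
        · ext1
          simp [toFun, invFun, hβk, hβs]
        · funext i
          simp [toFun, invFun, hβk, hβs]
      map_add' y z := by
        ext1
        · ext1
          simp only [toFun, AddSubgroup.coe_add, map_add, Prod.fst_add, Submodule.coe_add]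
          abel
        · funext i
          apply Int.cast_injective (α := ℝ)
          simp only [toFun, Prod.snd_add, Pi.add_apply, Int.cast_add, hfloor]
          simp }
  refine ⟨e, ?_, ?_⟩
  · refine (Continuous.subtype_mk ?_ _).prodMk (continuous_pi fun i => ?_)
    · fun_prop
    · rw [Int.isClosedEmbedding_coe_real.isEmbedding.continuous_iff]
      simp only [Function.comp_def, hfloor]
      fun_prop
  · refine Continuous.subtype_mk ?_ _
    have : Continuous fun m : ι → ℤ => (Int.cast ∘ m : ι → ℝ) :=
      continuous_pi fun i => Int.isClosedEmbedding_coe_real.continuous.comp (continuous_apply i)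
    fun_prop

end RightInverse

theorem eq_zero_of_forall_mul_eq_intCast {r : ℝ} (h : ∀ t : ℝ, ∃ m : ℤ, t * r = m) : r = 0 := by
  by_contra hr
  obtain ⟨m, hm⟩ := h (2 * r)⁻¹
  rw [mul_inv, mul_assoc, inv_mul_cancel₀ hr, mul_one] at hm
  have : ((2 * m : ℤ) : ℝ) = (1 : ℤ) := by push_cast; linarith
  have := Int.cast_injective this
  omega

section InnerProduct

variable {E : Type*} [NormedAddCommGroup E] [InnerProductSpace ℝ E]

theorem forall_inner_eq_intCast_iff {ι : Type*} [Fintype ι] {Γ : AddSubgroup E}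
    {V : Submodule ℝ E} {b : ι → E} (hVΓ : ∀ v ∈ V, v ∈ Γ) (hbΓ : ∀ i, b i ∈ Γ)
    (hΓ : ∀ x ∈ Γ, ∃ v ∈ V, ∃ m : ι → ℤ, x = v + ∑ i, m i • b i) (y : E) :
    (∀ x ∈ Γ, ∃ m : ℤ, inner ℝ x y = m) ↔ y ∈ Vᗮ ∧ ∀ i, ∃ m : ℤ, inner ℝ (b i) y = m := by
  constructor
  · intro h
    refine ⟨fun v hv => ?_, fun i => h _ (hbΓ i)⟩
    exact eq_zero_of_forall_mul_eq_intCast fun t =>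
      by simpa [real_inner_smul_left] using h _ (hVΓ _ (V.smul_mem t hv))
  · rintro ⟨hyV, hb⟩ x hx
    obtain ⟨v, hv, m, rfl⟩ := hΓ x hx
    choose k hk using hb
    refine ⟨∑ i, m i * k i, ?_⟩
    simp [inner_add_left, sum_inner, ← Int.cast_smul_eq_zsmul ℝ, real_inner_smul_left, hk,
      (mem_orthogonal V y).1 hyV v hv]

section InnerCoords

variable {ι : Type*}

def innerCoords (b : ι → E) : E →L[ℝ] (ι → ℝ) :=
  ContinuousLinearMap.pi fun i => innerSL ℝ (b i)

@[simp]
theorem innerCoords_apply (b : ι → E) (y : E) (i : ι) : innerCoords b y i = inner ℝ (b i) y :=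
  rfl

theorem ker_innerCoords (b : ι → E) : (innerCoords b).ker = (span ℝ (Set.range b))ᗮ := by
  ext y
  rw [LinearMap.mem_ker, ← span_singleton_le_iff_mem, ← isOrtho_iff_le, isOrtho_comm,
    isOrtho_span]
  simp [funext_iff]

theorem exists_rightInverse_innerCoords [Fintype ι] {b : ι → E} (hb : LinearIndependent ℝ b) :
    ∃ s : (ι → ℝ) →L[ℝ] E, (∀ c, innerCoords b (s c) = c) ∧ ∀ c, s c ∈ span ℝ (Set.range b) := by
  set U := span ℝ (Set.range b)
  have : FiniteDimensional ℝ U := .span_of_finite ℝ (Set.finite_range b)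
  let f : U →ₗ[ℝ] (ι → ℝ) := (innerCoords b).toLinearMap ∘ₗ U.subtype
  have hf : Function.Injective f := by
    rw [← LinearMap.ker_eq_bot, eq_bot_iff]
    intro u hu
    have hu' : (u : E) ∈ Uᗮ := by rw [← ker_innerCoords]; exact hu
    simpa using inner_self_eq_zero.1 ((mem_orthogonal U _).1 hu' u u.2)
  have hdim : finrank ℝ U = finrank ℝ (ι → ℝ) := by
    rw [finrank_span_eq_card hb, finrank_fintype_fun_eq_card]
  let g := f.linearEquivOfInjective hf hdim
  exact ⟨(U.subtype ∘ₗ g.symm.toLinearMap).toContinuousLinearMap, g.apply_symm_apply,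
    fun c => (g.symm c).2⟩

end InnerCoords

theorem finrank_orthogonal_sup_add_of_le_orthogonal [FiniteDimensional ℝ E] {V U : Submodule ℝ E}
    (hUV : U ≤ Vᗮ) :
    finrank ℝ (V ⊔ U)ᗮ + (finrank ℝ V + finrank ℝ U) = finrank ℝ E := by
  have hVU : V ⊓ U = ⊥ := eq_bot_iff.2 ((inf_le_inf_left V hUV).trans V.inf_orthogonal_eq_bot.le)
  have := finrank_sup_add_finrank_inf_eq V U
  rw [hVU, finrank_bot, add_zero] at this
  rw [← this, add_comm]
  exact finrank_add_finrank_orthogonal (V ⊔ U)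

theorem discreteTopology_inf_orthogonal {Γ : AddSubgroup E} {V : Submodule ℝ E}
    (hV : IsOpen {x : Γ | (x : E) ∈ V}) :
    DiscreteTopology (Γ ⊓ Vᗮ.toAddSubgroup : AddSubgroup E) := by
  obtain ⟨O, hO, hOV⟩ := isOpen_induced_iff.1 hV
  rw [discreteTopology_iff_isOpen_singleton_zero]
  convert hO.preimage continuous_subtype_val
  ext ⟨x, hxΓ, hxV⟩
  have hxO : x ∈ O ↔ x ∈ V := Set.ext_iff.1 hOV ⟨x, hxΓ⟩
  simp only [Set.mem_singleton_iff, Set.mem_preimage, hxO, Subtype.ext_iff, ZeroMemClass.coe_zero]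
  exact ⟨fun hx => hx ▸ V.zero_mem,
    fun hx => inner_self_eq_zero.1 ((mem_orthogonal V x).1 hxV x hx)⟩

section Splitting

variable {A : Type*} [NormedAddCommGroup A] [NormedSpace ℝ A] {ι : Type*}
  {Γ : AddSubgroup E} (e : Γ ≃ₜ+ A × (ι → ℤ))

def vectorPart : A →L[ℝ] E :=
  AddMonoidHom.toRealLinearMap
    (Γ.subtype.comp (e.toAddEquiv.symm.toAddMonoidHom.comp (AddMonoidHom.inl A (ι → ℤ))))
    (continuous_subtype_val.comp (e.symm.continuous.comp (Continuous.prodMk_left 0)))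

theorem vectorPart_apply (a : A) : vectorPart e a = e.symm (a, 0) :=
  rfl

def vectorSubspace : Submodule ℝ E :=
  (vectorPart e).range

theorem vectorSubspace_subset : (vectorSubspace e : Set E) ⊆ Γ := by
  rintro _ ⟨a, rfl⟩
  exact (e.symm (a, 0)).2

theorem finrank_vectorSubspace [FiniteDimensional ℝ A] :
    finrank ℝ (vectorSubspace e) = finrank ℝ A := by
  refine LinearMap.finrank_range_of_inj fun a a' h => ?_
  simpa using congrArg (fun x => (e x).1) (Subtype.val_injective h)

theorem mem_vectorSubspace_iff (x : Γ) : (x : E) ∈ vectorSubspace e ↔ (e x).2 = 0 := by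
  constructor
  · rintro ⟨a, ha⟩
    obtain rfl : e.symm (a, 0) = x := Subtype.val_injective ha
    simp
  · intro hx
    refine ⟨(e x).1, ?_⟩
    change vectorPart e (e x).1 = x
    rw [vectorPart_apply, ← hx]
    simp

theorem isOpen_vectorSubspace [Finite ι] : IsOpen {x : Γ | (x : E) ∈ vectorSubspace e} := by
  simp only [mem_vectorSubspace_iff]
  exact (isOpen_discrete {0}).preimage (continuous_snd.comp e.continuous)

variable [FiniteDimensional ℝ E]

def latticePart : (ι → ℤ) →+ E :=
  (vectorSubspace e)ᗮ.starProjection.toLinearMap.toAddMonoidHom.comp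
    (Γ.subtype.comp (e.toAddEquiv.symm.toAddMonoidHom.comp (AddMonoidHom.inr A (ι → ℤ))))

theorem latticePart_apply (m : ι → ℤ) :
    latticePart e m = (vectorSubspace e)ᗮ.starProjection (e.symm (0, m)) :=
  rfl

theorem latticePart_mem (m : ι → ℤ) : latticePart e m ∈ Γ := by
  rw [latticePart_apply, starProjection_orthogonal_val]
  exact Γ.sub_mem (e.symm (0, m)).2
    (vectorSubspace_subset e (starProjection_apply_mem _ _))

theorem latticePart_mem_orthogonal (m : ι → ℤ) : latticePart e m ∈ (vectorSubspace e)ᗮ :=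
  starProjection_apply_mem _ _

theorem latticePart_eq_zero_iff (m : ι → ℤ) : latticePart e m = 0 ↔ m = 0 := by
  rw [latticePart_apply, starProjection_apply_eq_zero_iff, orthogonal_orthogonal,
    mem_vectorSubspace_iff]
  simp

theorem exists_eq_add_latticePart (x : Γ) :
    ∃ v ∈ vectorSubspace e, ∃ m, (x : E) = v + latticePart e m := by
  obtain ⟨a, m, hx⟩ : ∃ a m, x = e.symm (a, 0) + e.symm (0, m) :=
    ⟨(e x).1, (e x).2, by rw [← map_add]; simp⟩
  refine ⟨vectorPart e a + (vectorSubspace e).starProjection (e.symm (0, m) : E),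
    add_mem ⟨a, rfl⟩ (starProjection_apply_mem _ _), m, ?_⟩
  rw [latticePart_apply, starProjection_orthogonal_val, hx, AddSubgroup.coe_add, vectorPart_apply]
  abel

def latticeBasis [DecidableEq ι] (i : ι) : E :=
  latticePart e (Pi.single i 1)

theorem latticePart_eq_sum [Fintype ι] [DecidableEq ι] (m : ι → ℤ) :
    latticePart e m = ∑ i, m i • latticeBasis e i := by
  conv_lhs => rw [← Finset.univ_sum_single m]
  rw [map_sum]
  refine Finset.sum_congr rfl fun i _ => ?_
  rw [latticeBasis, ← map_zsmul, ← Pi.single_smul', smul_eq_mul, mul_one]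

theorem linearIndependent_latticeBasis [Fintype ι] [DecidableEq ι] :
    LinearIndependent ℝ (latticeBasis e) := by
  have hℤ : LinearIndependent ℤ (latticeBasis e) :=
    Fintype.linearIndependent_iff.2 fun m hm => by
      rw [← latticePart_eq_sum, latticePart_eq_zero_iff] at hm
      simp [hm]
  have hdisc : DiscreteTopology (span ℤ (Set.range (latticeBasis e))) := by
    refine (discreteTopology_inf_orthogonal (isOpen_vectorSubspace e)).of_subset ?_
    refine span_le (p := (Γ ⊓ (vectorSubspace e)ᗮ.toAddSubgroup).toIntSubmodule).2 ?_
    rintro _ ⟨i, rfl⟩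
    exact ⟨latticePart_mem e _, latticePart_mem_orthogonal e _⟩
  rw [linearIndependent_iff_card_eq_finrank_span, Real.finrank_eq_int_finrank_of_discrete hdisc,
    ← linearIndependent_iff_card_eq_finrank_span]
  exact hℤ

theorem span_latticeBasis_le_orthogonal [DecidableEq ι] :
    span ℝ (Set.range (latticeBasis e)) ≤ (vectorSubspace e)ᗮ :=
  span_le.2 (Set.range_subset_iff.2 fun _ => latticePart_mem_orthogonal e _)

theorem forall_inner_eq_intCast_iff_latticeBasis [Fintype ι] [DecidableEq ι] (y : E) :
    (∀ x ∈ Γ, ∃ m : ℤ, inner ℝ x y = m) ↔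
      y ∈ (vectorSubspace e)ᗮ ∧ ∀ i, ∃ m : ℤ, inner ℝ (latticeBasis e i) y = m := by
  refine forall_inner_eq_intCast_iff (vectorSubspace_subset e) (fun i => latticePart_mem e _)
    (fun x hx => ?_) y
  obtain ⟨v, hv, m, hxv⟩ := exists_eq_add_latticePart e ⟨x, hx⟩
  exact ⟨v, hv, m, hxv.trans (congrArg _ (latticePart_eq_sum e m))⟩

theorem finrank_orthogonal_inf_ker_innerCoords_latticeBasis [FiniteDimensional ℝ A] [Fintype ι]
    [DecidableEq ι] :
    finrank ℝ ((vectorSubspace e)ᗮ ⊓ (innerCoords (latticeBasis e)).ker : Submodule ℝ E) +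
      (finrank ℝ A + Fintype.card ι) = finrank ℝ E := by
  rw [ker_innerCoords, inf_orthogonal, ← finrank_vectorSubspace e,
    ← finrank_span_eq_card (linearIndependent_latticeBasis e)]
  exact finrank_orthogonal_sup_add_of_le_orthogonal (span_latticeBasis_le_orthogonal e)

end Splitting

end InnerProduct

theorem dual_type_general (n p q : ℕ) (Γ : AddSubgroup (Euc n))
    (htype : ∃ e : Γ ≃+ ((Fin p → ℝ) × (Fin q → ℤ)), Continuous e ∧ Continuous e.symm)
    (Δ : AddSubgroup (Euc n))
    (hΔ : (Δ : Set (Euc n)) =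
      {y : Euc n | ∀ x ∈ (Γ : Set (Euc n)), ∃ m : ℤ, (inner ℝ x y : ℝ) = (m : ℝ)}) :
    ∃ e : Δ ≃+ ((Fin (n - (p + q)) → ℝ) × (Fin q → ℤ)), Continuous e ∧ Continuous e.symm := by
  obtain ⟨e₀, he₀, he₀'⟩ := htype
  let e : Γ ≃ₜ+ (Fin p → ℝ) × (Fin q → ℤ) :=
    { e₀ with continuous_toFun := he₀, continuous_invFun := he₀' }
  obtain ⟨s, hs, hsU⟩ := exists_rightInverse_innerCoords (linearIndependent_latticeBasis e)
  obtain ⟨f, hf, hf'⟩ := exists_addEquiv_prod_int_of_rightInverse (vectorSubspace e)ᗮ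
    (innerCoords (latticeBasis e)) s hs (fun c => span_latticeBasis_le_orthogonal e (hsU c)) Δ
    (fun y => (Set.ext_iff.1 hΔ y).trans (forall_inner_eq_intCast_iff_latticeBasis e y))
  have hdim : finrank ℝ ((vectorSubspace e)ᗮ ⊓ (innerCoords (latticeBasis e)).ker :
      Submodule ℝ (Euc n)) = finrank ℝ (Fin (n - (p + q)) → ℝ) := by
    have := finrank_orthogonal_inf_ker_innerCoords_latticeBasis e
    simp only [finrank_fin_fun, Fintype.card_fin, finrank_euclideanSpace_fin] at this ⊢
    omega
  let g := ContinuousLinearEquiv.ofFinrankEq hdim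
  exact ⟨f.trans (g.toAddEquiv.prodCongr (AddEquiv.refl _)),
    (g.continuous.prodMap continuous_id).comp hf,
    hf'.comp (g.symm.continuous.prodMap continuous_id)⟩

/-- If Γ is a closed subgroup of ℝⁿ topologically isomorphic to ℝᵖ × ℤ^q, then its dual
Γ* = {y | ∀ x ∈ Γ, x·y ∈ ℤ} is topologically isomorphic to ℝ^{n-(p+q)} × ℤ^q. -/
theorem dual_type (n p q : ℕ) (Γ : AddSubgroup (Euc n)) (hΓ : IsClosed (Γ : Set (Euc n)))
    (htype : ∃ e : Γ ≃+ ((Fin p → ℝ) × (Fin q → ℤ)), Continuous e ∧ Continuous e.symm)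
    (Δ : AddSubgroup (Euc n))
    (hΔ : (Δ : Set (Euc n)) =
      {y : Euc n | ∀ x ∈ (Γ : Set (Euc n)), ∃ m : ℤ, (inner ℝ x y : ℝ) = (m : ℝ)}) :
    ∃ e : Δ ≃+ ((Fin (n - (p + q)) → ℝ) × (Fin q → ℤ)), Continuous e ∧ Continuous e.symm :=
  dual_type_general n p q Γ htype Δ hΔ
end
end

section
/- The connected component of the identity Γ₀ of a closed subgroup Γ of ℝⁿ is a linear subspace of ℝⁿ, and equals the intersection over all r > 0 of the subgroups generated by Γ ∩ closedBall(0, r). -/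
noncomputable section

/-!
Let `V = {x | ∀ t : ℝ, t • x ∈ Γ}`, the largest linear subspace contained in `Γ`. Every small
enough element of `Γ` lies in `V`: for a complement `W` of `V`, the closed subgroup `Γ ∩ W`
contains no line, hence is discrete, since otherwise its normalised small nonzero elements would
accumulate at a unit vector `v`, and integer multiples of them would approximate every `t • v`.
Hence `V` is an open, therefore clopen, connected subgroup of `Γ`, i.e. its identity component.
It is also the intersection of the subgroups generated by `Γ ∩ closedBall 0 r`: each of them
contains the divisible group `V`, and for small `r` they are contained in `V`.
-/

open Filter Metric Topology

namespace AddSubgroup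

section Module

variable {M : Type*} [AddCommGroup M] (R : Type*) [Ring R] [Module R M]

def linearPart (Γ : AddSubgroup M) : Submodule R M where
  carrier := {x | ∀ t : R, t • x ∈ Γ}
  zero_mem' t := by simp
  add_mem' hx hy t := by simpa [smul_add] using Γ.add_mem (hx t) (hy t)
  smul_mem' c x hx t := by simpa [smul_smul] using hx (t * c)

variable {R} {Γ : AddSubgroup M}

lemma linearPart_subset : (Γ.linearPart R : Set M) ⊆ Γ := fun x hx => by
  simpa using hx 1

end Module

lemma connectedComponentIn_eq_of_eventually_mem {G : Type*} [TopologicalSpace G] [AddGroup G]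
    [IsTopologicalAddGroup G] {Γ Λ : AddSubgroup G} (hΛΓ : Λ ≤ Γ)
    (hΛ : IsPreconnected (Λ : Set G)) (hΛc : IsClosed (Λ : Set G))
    (hopen : ∀ᶠ x in 𝓝 0, x ∈ Γ → x ∈ Λ) :
    connectedComponentIn (Γ : Set G) 0 = Λ := by
  refine Set.Subset.antisymm ?_ (hΛ.subset_connectedComponentIn Λ.zero_mem hΛΓ)
  set O := {x | ∀ᶠ y in 𝓝 x, y ∈ Γ → y ∈ Λ}
  have hΛO : (Λ : Set G) ⊆ O := fun v hv =>
    ((continuous_sub_right v).tendsto' v 0 (sub_self v)).eventually hopen |>.mono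
      fun y hy hyΓ => by simpa using Λ.add_mem (hy (Γ.sub_mem hyΓ (hΛΓ hv))) hv
  intro c hcC
  by_contra hcΛ
  obtain ⟨z, hzC, hzO, hzΛ⟩ := isPreconnected_connectedComponentIn O (Λ : Set G)ᶜ
    isOpen_setOfPred_eventually_nhds hΛc.isOpen_compl
    (fun y _ => (em (y ∈ Λ)).imp (fun h => hΛO h) id)
    ⟨0, mem_connectedComponentIn Γ.zero_mem, hΛO Λ.zero_mem⟩ ⟨c, hcC, hcΛ⟩
  exact hzΛ (hzO.self_of_nhds (connectedComponentIn_subset _ _ hzC))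

variable {E : Type*} [NormedAddCommGroup E] [NormedSpace ℝ E] {H : AddSubgroup E}

lemma mem_closure_inter_closedBall_of_mem {V : Submodule ℝ E} {x : E} (hx : x ∈ V)
    {r : ℝ} (hr : 0 < r) : x ∈ AddSubgroup.closure ((V : Set E) ∩ closedBall 0 r) := by
  obtain ⟨m, hm⟩ := exists_nat_gt (‖x‖ / r)
  have hm0 : (0 : ℝ) < m := (div_nonneg (norm_nonneg x) hr.le).trans_lt hm
  have hsmall : (m : ℝ)⁻¹ • x ∈ AddSubgroup.closure ((V : Set E) ∩ closedBall 0 r) := by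
    refine subset_closure ⟨V.smul_mem _ hx, ?_⟩
    rw [mem_closedBall_zero_iff, norm_smul, norm_inv, Real.norm_natCast, inv_mul_le_iff₀ hm0]
    exact ((div_lt_iff₀ hr).1 hm).le
  simpa [← Nat.cast_smul_eq_nsmul ℝ, smul_smul, hm0.ne'] using nsmul_mem hsmall m

lemma iInter_closure_inter_closedBall_eq {V : Submodule ℝ E} (hVH : (V : Set E) ⊆ H)
    (hopen : ∀ᶠ x in 𝓝 0, x ∈ H → x ∈ V) :
    ⋂ r ∈ Set.Ioi (0 : ℝ), (AddSubgroup.closure ((H : Set E) ∩ closedBall 0 r) : Set E) = V := by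
  obtain ⟨ε, hε, hsmall⟩ := Metric.eventually_nhds_iff_ball.1 hopen
  ext x
  simp only [Set.mem_iInter₂, Set.mem_Ioi, SetLike.mem_coe]
  refine ⟨fun hx => ?_, fun hx r hr => closure_mono (Set.inter_subset_inter_left _ hVH)
    (mem_closure_inter_closedBall_of_mem hx hr)⟩
  refine (closure_le (K := V.toAddSubgroup)).2 ?_ (hx (ε / 2) (half_pos hε))
  rintro y ⟨hyH, hy⟩
  exact hsmall y (closedBall_subset_ball (half_lt_self hε) hy) hyH

/-- `⌊t / ‖x k‖⌋ • x k ∈ H` differs from `t • (‖x k‖⁻¹ • x k)` by at most `‖x k‖`. -/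
lemma smul_mem_of_tendsto_normalize {ι : Type*} {l : Filter ι} [l.NeBot]
    (hH : IsClosed (H : Set E)) {x : ι → E} {v : E} (hxH : ∀ k, x k ∈ H)
    (hx : Tendsto x l (𝓝 0)) (hv : Tendsto (fun k => ‖x k‖⁻¹ • x k) l (𝓝 v)) (t : ℝ) :
    t • v ∈ H := by
  have hmem : ∀ k, t • (‖x k‖⁻¹ • x k) - Int.fract (t * ‖x k‖⁻¹) • x k ∈ H := fun k => by
    rw [smul_smul, ← sub_smul, Int.self_sub_fract, Int.cast_smul_eq_zsmul]
    exact H.zsmul_mem (hxH k) _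
  have hfract : Tendsto (fun k => Int.fract (t * ‖x k‖⁻¹) • x k) l (𝓝 0) := by
    refine squeeze_zero_norm (fun k => ?_) (tendsto_norm_zero.comp hx)
    rw [norm_smul, Real.norm_of_nonneg (Int.fract_nonneg _)]
    exact mul_le_of_le_one_left (norm_nonneg _) (Int.fract_lt_one _).le
  simpa using hH.mem_of_tendsto ((hv.const_smul t).sub hfract) (Eventually.of_forall hmem)

lemma eventually_eq_zero_of_linearPart_eq_bot [FiniteDimensional ℝ E]
    (hH : IsClosed (H : Set E)) (hline : H.linearPart ℝ = ⊥) :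
    ∀ᶠ x in 𝓝 (0 : E), x ∈ H → x = 0 := by
  by_contra h
  simp only [not_eventually, Classical.not_imp] at h
  obtain ⟨x, hx, hxH⟩ := frequently_iff_seq_forall.1 h
  have hsphere : ∀ k, ‖x k‖⁻¹ • x k ∈ sphere (0 : E) 1 := fun k => by
    simpa using norm_smul_inv_norm (𝕜 := ℝ) (hxH k).2
  obtain ⟨v, hv, φ, hφ, hlim⟩ := (isCompact_sphere (0 : E) 1).tendsto_subseq hsphere
  have hvH : v ∈ H.linearPart ℝ := smul_mem_of_tendsto_normalize hH (fun k => (hxH (φ k)).1)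
    (hx.comp hφ.tendsto_atTop) hlim
  rw [hline, Submodule.mem_bot] at hvH
  simp [hvH] at hv

lemma eventually_mem_linearPart [FiniteDimensional ℝ E] (hH : IsClosed (H : Set E)) :
    ∀ᶠ x in 𝓝 (0 : E), x ∈ H → x ∈ H.linearPart ℝ := by
  set V := H.linearPart ℝ
  obtain ⟨W, hVW⟩ := V.exists_isCompl
  set K := H ⊓ W.toAddSubgroup
  have hK : IsClosed (K : Set E) := hH.inter W.closed_of_finiteDimensional
  have hKline : K.linearPart ℝ = ⊥ := (Submodule.eq_bot_iff _).2 fun x hx =>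
    Submodule.disjoint_def.1 hVW.disjoint x (fun t => (hx t).1) (by simpa using (hx 1).2)
  have hproj : Continuous (fun x => x - V.projection W hVW x) :=
    continuous_id.sub (V.projection W hVW).continuous_of_finiteDimensional
  filter_upwards [(hproj.tendsto' 0 0 (by simp)).eventually
    (eventually_eq_zero_of_linearPart_eq_bot hK hKline)] with x hx hxH
  have hxK : x - V.projection W hVW x ∈ K :=
    ⟨H.sub_mem hxH (linearPart_subset (Submodule.projection_apply_mem hVW x)),
      Submodule.sub_projection_mem hVW x⟩
  exact (Submodule.projection_eq_self_iff hVW x).1 (sub_eq_zero.1 (hx hxK)).symm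

end AddSubgroup

/-- The connected component of the identity of a closed subgroup Γ of ℝⁿ is a linear subspace
and equals ⋂_{r>0} of the subgroups generated by Γ ∩ closedBall(0,r). -/
theorem continuous_part_subspace (n : ℕ) (Γ : AddSubgroup (Euc n))
    (hΓ : IsClosed (Γ : Set (Euc n))) :
    (∃ V : Submodule ℝ (Euc n),
        (V : Set (Euc n)) = connectedComponentIn (Γ : Set (Euc n)) 0) ∧
    connectedComponentIn (Γ : Set (Euc n)) 0 =
      ⋂ r ∈ Set.Ioi (0 : ℝ),
        (AddSubgroup.closure ((Γ : Set (Euc n)) ∩ Metric.closedBall 0 r) : Set (Euc n)) := by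
  have hopen := AddSubgroup.eventually_mem_linearPart hΓ
  have hcomponent : connectedComponentIn (Γ : Set (Euc n)) 0 = Γ.linearPart ℝ :=
    AddSubgroup.connectedComponentIn_eq_of_eventually_mem (Λ := (Γ.linearPart ℝ).toAddSubgroup)
      AddSubgroup.linearPart_subset (Submodule.convex _).isPreconnected
      (Submodule.closed_of_finiteDimensional _) hopen
  exact ⟨⟨_, hcomponent.symm⟩,
    hcomponent.trans
      (AddSubgroup.iInter_closure_inter_closedBall_eq AddSubgroup.linearPart_subset hopen).symm⟩
end
end

section
/- For compact topological spaces X and Y, the product of open cones cX × cY is homeomorphic to the open cone c(X ⋆ Y) over the join of X and Y. -/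
noncomputable section

/-- Relation defining the open cone: collapse X × {0} to a point. -/
def coneRel (X : Type*) (a b : X × Set.Ico (0 : ℝ) 1) : Prop :=
  a = b ∨ ((a.2 : ℝ) = 0 ∧ (b.2 : ℝ) = 0)

/-- The open cone over X: the quotient of X × [0,1) collapsing X × {0} to a point. -/
def OpenCone (X : Type*) [TopologicalSpace X] : Type _ := Quot (coneRel X)

instance (X : Type*) [TopologicalSpace X] : TopologicalSpace (OpenCone X) :=
  instTopologicalSpaceQuot

/-- Relation defining the join: (x,y,0) ∼ (x',y,0) and (x,y,1) ∼ (x,y',1). -/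
def joinRel (X Y : Type*) (a b : X × Y × Set.Icc (0 : ℝ) 1) : Prop :=
  a = b ∨ ((a.2.2 : ℝ) = 0 ∧ (b.2.2 : ℝ) = 0 ∧ a.2.1 = b.2.1) ∨
    ((a.2.2 : ℝ) = 1 ∧ (b.2.2 : ℝ) = 1 ∧ a.1 = b.1)

/-- The join X ⋆ Y. -/
def Join (X Y : Type*) [TopologicalSpace X] [TopologicalSpace Y] : Type _ := Quot (joinRel X Y)

instance (X Y : Type*) [TopologicalSpace X] [TopologicalSpace Y] : TopologicalSpace (Join X Y) :=
  instTopologicalSpaceQuot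

/-!
Both cones are quotients of `P = (X × Y × [0,1]) × [0,1)`: `c(X ⋆ Y)` through
`((x, y, u), r) ↦ [[x, y, u], r]`, and `cX × cY` through `((x, y, u), r) ↦ ([x, s], [y, t])`,
where `(s, t)` is the point of the quadrant with sup-norm `r` and "angle" `u`. The two maps have
the same fibres, so the second one factors through a continuous bijection
`c(X ⋆ Y) → cX × cY`. It is continuous because `[0,1)` is locally compact, so that
`Join.mk × id` is again a quotient map, and it is closed because for compact `X` and `Y` the
map `P → cX × cY` is proper.
-/

open Set Topology Function

theorem IsProperMap.isHomeomorph_of_comp_eq {P A B : Type*} [TopologicalSpace P]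
    [TopologicalSpace A] [TopologicalSpace B] {p : P → A} {q : P → B} {f : B → A}
    (hp : IsProperMap p) (hps : Surjective p) (hq : Continuous q) (hqs : Surjective q)
    (hpq : ∀ x y, p x = p y → q x = q y) (hf : Continuous f) (hfq : ∀ x, f (q x) = p x) :
    IsHomeomorph f := by
  refine isHomeomorph_iff_continuous_isClosedMap_bijective.2 ⟨hf, fun C hC => ?_, ?_, ?_⟩
  · rw [← image_preimage_eq C hqs, image_image]
    simp_rw [hfq]
    exact hp.isClosedMap _ (hC.preimage hq)
  · intro b b' h
    obtain ⟨x, rfl⟩ := hqs b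
    obtain ⟨y, rfl⟩ := hqs b'
    exact hpq x y (by rwa [hfq, hfq] at h)
  · intro a
    obtain ⟨x, hx⟩ := hps a
    exact ⟨q x, (hfq x).trans hx⟩

/-- Polar coordinates for the sup-norm on the quadrant `[0,∞)²`: the angle `u ∈ [0,1]` runs
along the L-shaped unit sphere `max s t = 1` from `(0, 1)` to `(1, 0)`. -/
def supPolar (u r : ℝ) : ℝ × ℝ := (r * min 1 (2 * u), r * min 1 (2 * (1 - u)))

section supPolar

variable {u r : ℝ}

theorem supPolar_fst_mem_Ico (hu : 0 ≤ u) (hr : r ∈ Ico (0 : ℝ) 1) :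
    (supPolar u r).1 ∈ Ico (0 : ℝ) 1 :=
  ⟨mul_nonneg hr.1 (le_min zero_le_one (by linarith)),
    (mul_le_of_le_one_right hr.1 (min_le_left _ _)).trans_lt hr.2⟩

theorem supPolar_snd_mem_Ico (hu : u ≤ 1) (hr : r ∈ Ico (0 : ℝ) 1) :
    (supPolar u r).2 ∈ Ico (0 : ℝ) 1 :=
  ⟨mul_nonneg hr.1 (le_min zero_le_one (by linarith)),
    (mul_le_of_le_one_right hr.1 (min_le_left _ _)).trans_lt hr.2⟩

theorem max_supPolar (hr : 0 ≤ r) : max (supPolar u r).1 (supPolar u r).2 = r := by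
  rw [supPolar, ← mul_max_of_nonneg _ _ hr, ← min_max_distrib_left,
    min_eq_left (le_max_iff.2 ((le_total u (1 / 2)).symm.imp (fun h => by linarith)
      fun h => by linarith)), mul_one]

theorem supPolar_fst_sub_snd : (supPolar u r).1 - (supPolar u r).2 = r * (2 * u - 1) := by
  rcases le_total u (1 / 2) with h | h
  · rw [supPolar, min_eq_right (by linarith), min_eq_left (by linarith)]; ring
  · rw [supPolar, min_eq_left (by linarith), min_eq_right (by linarith)]; ring

theorem supPolar_eq_supPolar_iff {u' r' : ℝ} (hr : 0 ≤ r) (hr' : 0 ≤ r') :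
    supPolar u r = supPolar u' r' ↔ r = r' ∧ (r = 0 ∨ u = u') := by
  refine ⟨fun h => ?_, by rintro ⟨rfl, rfl | rfl⟩ <;> simp [supPolar]⟩
  obtain rfl : r = r' := by rw [← max_supPolar hr, ← max_supPolar hr', h]
  have : r * (2 * u - 1) = r * (2 * u' - 1) := by
    rw [← supPolar_fst_sub_snd, h, supPolar_fst_sub_snd]
  exact ⟨rfl, (mul_eq_mul_left_iff.1 this).symm.imp_right fun h => by linarith⟩

theorem supPolar_fst_eq_zero_iff : (supPolar u r).1 = 0 ↔ r = 0 ∨ u = 0 := by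
  simp only [supPolar, mul_eq_zero]
  grind

theorem supPolar_snd_eq_zero_iff : (supPolar u r).2 = 0 ↔ r = 0 ∨ u = 1 := by
  simp only [supPolar, mul_eq_zero]
  grind

theorem exists_supPolar_eq {s t : ℝ} (hs : 0 ≤ s) (ht : 0 ≤ t) :
    ∃ u ∈ Icc (0 : ℝ) 1, supPolar u (max s t) = (s, t) := by
  have hm := (le_max_of_le_left hs : 0 ≤ max s t)
  generalize hm_def : max s t = m at hm ⊢
  rcases hm.eq_or_lt with rfl | hm
  · obtain ⟨rfl, rfl⟩ : s = 0 ∧ t = 0 := by grind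
    exact ⟨0, by simp, by simp [supPolar]⟩
  -- `u` is solved from `supPolar_fst_sub_snd`
  refine ⟨(s - t + m) / (2 * m), ⟨div_nonneg (by grind) (by positivity),
    (div_le_one (by positivity)).2 (by grind)⟩, ?_⟩
  have hx : 2 * ((s - t + m) / (2 * m)) = (s - t + m) / m := by field_simp
  have hy : 2 * (1 - (s - t + m) / (2 * m)) = (t - s + m) / m := by field_simp; ring
  rw [supPolar, hx, hy, mul_min_of_nonneg _ _ hm.le, mul_min_of_nonneg _ _ hm.le, mul_one,
    mul_div_cancel₀ _ hm.ne', mul_div_cancel₀ _ hm.ne']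
  ext <;> grind

end supPolar

def supPolarIco (p : Icc (0 : ℝ) 1 × Ico (0 : ℝ) 1) : Ico (0 : ℝ) 1 × Ico (0 : ℝ) 1 :=
  (⟨(supPolar p.1 p.2).1, supPolar_fst_mem_Ico p.1.2.1 p.2.2⟩,
    ⟨(supPolar p.1 p.2).2, supPolar_snd_mem_Ico p.1.2.2 p.2.2⟩)

theorem surjective_supPolarIco : Surjective supPolarIco := by
  rintro ⟨⟨s, hs⟩, ⟨t, ht⟩⟩
  obtain ⟨u, hu, h⟩ := exists_supPolar_eq hs.1 ht.1
  exact ⟨(⟨u, hu⟩, ⟨max s t, le_max_of_le_left hs.1, max_lt hs.2 ht.2⟩),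
    Prod.ext (Subtype.ext (congrArg Prod.fst h)) (Subtype.ext (congrArg Prod.snd h))⟩

theorem continuous_supPolarIco : Continuous supPolarIco := by
  unfold supPolarIco supPolar
  fun_prop

theorem isProperMap_supPolarIco : IsProperMap supPolarIco := by
  refine isProperMap_iff_isCompact_preimage.2 ⟨continuous_supPolarIco, fun K hK => ?_⟩
  obtain ⟨c₁, hc₁⟩ := (hK.image continuous_fst).bddAbove
  obtain ⟨c₂, hc₂⟩ := (hK.image continuous_snd).bddAbove
  have hsub : supPolarIco ⁻¹' K ⊆ univ ×ˢ {r : Ico (0 : ℝ) 1 | (r : ℝ) ≤ max (c₁ : ℝ) c₂} := by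
    rintro ⟨u, r⟩ h
    refine ⟨trivial, ?_⟩
    calc (r : ℝ) = max (supPolar u r).1 (supPolar u r).2 := (max_supPolar r.2.1).symm
      _ ≤ max (c₁ : ℝ) c₂ := max_le_max (hc₁ ⟨_, h, rfl⟩) (hc₂ ⟨_, h, rfl⟩)
  have hcpt : IsCompact {r : Ico (0 : ℝ) 1 | (r : ℝ) ≤ max (c₁ : ℝ) c₂} := by
    rw [Subtype.isCompact_iff]
    convert isCompact_Icc (a := (0 : ℝ)) (b := max (c₁ : ℝ) c₂)
    ext t
    simp only [mem_image, mem_ofPred_eq, mem_Icc, Subtype.exists, mem_Ico]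
    have := max_lt c₁.2.2 c₂.2.2
    grind
  exact (isCompact_univ.prod hcpt).of_isClosed_subset
    (hK.isClosed.preimage continuous_supPolarIco) hsub

theorem coneRel_iff {X : Type*} {a b : X × Ico (0 : ℝ) 1} :
    coneRel X a b ↔ a.2 = b.2 ∧ ((a.2 : ℝ) = 0 ∨ a.1 = b.1) := by
  rw [coneRel, Prod.ext_iff, Subtype.ext_iff]
  grind

theorem coneRel_equivalence (X : Type*) : Equivalence (coneRel X) := by
  constructor <;> intros <;> simp only [coneRel_iff] at * <;> grind

def OpenCone.mk {X : Type*} [TopologicalSpace X] : X × Ico (0 : ℝ) 1 → OpenCone X :=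
  Quot.mk _

def Join.mk {X Y : Type*} [TopologicalSpace X] [TopologicalSpace Y] :
    X × Y × Icc (0 : ℝ) 1 → Join X Y :=
  Quot.mk _

theorem OpenCone.mk_eq_mk_iff {X : Type*} [TopologicalSpace X] {a b : X × Ico (0 : ℝ) 1} :
    OpenCone.mk a = OpenCone.mk b ↔ a.2 = b.2 ∧ ((a.2 : ℝ) = 0 ∨ a.1 = b.1) :=
  Quot.eq.trans <| (coneRel_equivalence X).eqvGen_iff.trans coneRel_iff

theorem joinRel_iff {X Y : Type*} {a b : X × Y × Icc (0 : ℝ) 1} :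
    joinRel X Y a b ↔ a.2.2 = b.2.2 ∧ ((a.2.2 : ℝ) = 0 ∨ a.1 = b.1) ∧
      ((a.2.2 : ℝ) = 1 ∨ a.2.1 = b.2.1) := by
  rw [joinRel, Prod.ext_iff, Prod.ext_iff, Subtype.ext_iff]
  grind

theorem joinRel_equivalence (X Y : Type*) : Equivalence (joinRel X Y) := by
  constructor <;> intros <;> simp only [joinRel_iff] at * <;> grind

theorem Join.mk_eq_mk_iff {X Y : Type*} [TopologicalSpace X] [TopologicalSpace Y]
    {a b : X × Y × Icc (0 : ℝ) 1} :
    Join.mk a = Join.mk b ↔ a.2.2 = b.2.2 ∧ ((a.2.2 : ℝ) = 0 ∨ a.1 = b.1) ∧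
      ((a.2.2 : ℝ) = 1 ∨ a.2.1 = b.2.1) :=
  Quot.eq.trans <| (joinRel_equivalence X Y).eqvGen_iff.trans joinRel_iff

section OpenCone

variable {X : Type*} [TopologicalSpace X]

theorem OpenCone.isQuotientMap_mk : IsQuotientMap (OpenCone.mk (X := X)) :=
  isQuotientMap_quot_mk

theorem OpenCone.isClosedMap_mk : IsClosedMap (OpenCone.mk (X := X)) := by
  intro C hC
  rw [← OpenCone.isQuotientMap_mk.isClosed_preimage]
  -- the saturation of `C` is `C`, plus the whole base `X × {0}` if `C` meets it
  by_cases h : ∃ c ∈ C, (c.2 : ℝ) = 0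
  · have h0 : IsClosed {p : X × Ico (0 : ℝ) 1 | (p.2 : ℝ) = 0} :=
      isClosed_eq (by fun_prop) continuous_const
    convert hC.union h0 using 1
    ext p
    simp only [mem_preimage, mem_image, OpenCone.mk_eq_mk_iff, mem_union, mem_ofPred_eq]
    constructor
    · rintro ⟨c, hc, hcp, hc0 | hcx⟩
      · exact .inr (hcp ▸ hc0)
      · exact .inl (Prod.ext hcx hcp ▸ hc)
    · rintro (hp | hp0)
      · exact ⟨p, hp, rfl, .inr rfl⟩
      · obtain ⟨c, hc, hc0⟩ := h
        exact ⟨c, hc, Subtype.ext (hc0.trans hp0.symm), .inl hc0⟩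
  · convert hC using 1
    ext p
    simp only [mem_preimage, mem_image, OpenCone.mk_eq_mk_iff]
    constructor
    · rintro ⟨c, hc, hcp, hc0 | hcx⟩
      · exact absurd ⟨c, hc, hc0⟩ h
      · exact Prod.ext hcx hcp ▸ hc
    · exact fun hp => ⟨p, hp, rfl, .inr rfl⟩

theorem OpenCone.isProperMap_mk [CompactSpace X] : IsProperMap (OpenCone.mk (X := X)) := by
  refine isProperMap_iff_isClosedMap_and_compact_fibers.2
    ⟨OpenCone.isQuotientMap_mk.continuous, OpenCone.isClosedMap_mk,
      OpenCone.isQuotientMap_mk.surjective.forall.2 fun p => ?_⟩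
  by_cases h : (p.2 : ℝ) = 0
  · convert (isCompact_univ (X := X)).prod (isCompact_singleton (x := p.2))
    ext c
    simp only [mem_preimage, mem_singleton_iff, OpenCone.mk_eq_mk_iff, mem_prod, mem_univ, true_and]
    grind [Subtype.ext_iff]
  · convert isCompact_singleton (x := p)
    ext c
    simp only [mem_preimage, mem_singleton_iff, OpenCone.mk_eq_mk_iff]
    grind [Prod.ext_iff]

end OpenCone

section JoinCone

variable {X Y : Type*}

def coneCoords (p : (X × Y × Icc (0 : ℝ) 1) × Ico (0 : ℝ) 1) :
    (X × Ico (0 : ℝ) 1) × (Y × Ico (0 : ℝ) 1) :=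
  ((p.1.1, (supPolarIco (p.1.2.2, p.2)).1), (p.1.2.1, (supPolarIco (p.1.2.2, p.2)).2))

theorem surjective_coneCoords : Surjective (coneCoords (X := X) (Y := Y)) := by
  rintro ⟨⟨x, s⟩, ⟨y, t⟩⟩
  obtain ⟨⟨u, r⟩, h⟩ := surjective_supPolarIco (s, t)
  exact ⟨((x, y, u), r), by simp [coneCoords, h]⟩

variable [TopologicalSpace X] [TopologicalSpace Y]

theorem isProperMap_coneCoords : IsProperMap (coneCoords (X := X) (Y := Y)) := by
  let e : (X × Y × Icc (0 : ℝ) 1) × Ico (0 : ℝ) 1 ≃ₜ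
      (X × Y) × (Icc (0 : ℝ) 1 × Ico (0 : ℝ) 1) :=
    { toFun p := ((p.1.1, p.1.2.1), (p.1.2.2, p.2))
      invFun q := ((q.1.1, q.1.2, q.2.1), q.2.2)
      left_inv _ := rfl
      right_inv _ := rfl }
  exact (Homeomorph.prodProdProdComm _ _ _ _).isProperMap.comp
    ((isProperMap_id.prodMap isProperMap_supPolarIco).comp e.isProperMap)

def prodConeMk (p : (X × Y × Icc (0 : ℝ) 1) × Ico (0 : ℝ) 1) : OpenCone X × OpenCone Y :=
  Prod.map OpenCone.mk OpenCone.mk (coneCoords p)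

def joinConeMk (p : (X × Y × Icc (0 : ℝ) 1) × Ico (0 : ℝ) 1) : OpenCone (Join X Y) :=
  OpenCone.mk (Join.mk p.1, p.2)

theorem prodConeMk_eq_prodConeMk_iff {p p' : (X × Y × Icc (0 : ℝ) 1) × Ico (0 : ℝ) 1} :
    prodConeMk p = prodConeMk p' ↔ joinConeMk p = joinConeMk p' := by
  obtain ⟨⟨x, y, u⟩, r⟩ := p
  obtain ⟨⟨x', y', u'⟩, r'⟩ := p'
  simp only [prodConeMk, joinConeMk, coneCoords, supPolarIco, Prod.map, Prod.ext_iff,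
    OpenCone.mk_eq_mk_iff, Join.mk_eq_mk_iff, Subtype.ext_iff]
  rw [and_and_and_comm, ← Prod.ext_iff, supPolar_eq_supPolar_iff r.2.1 r'.2.1,
    supPolar_fst_eq_zero_iff, supPolar_snd_eq_zero_iff]
  tauto

theorem continuous_prodConeMk : Continuous (prodConeMk (X := X) (Y := Y)) :=
  (OpenCone.isQuotientMap_mk.continuous.prodMap OpenCone.isQuotientMap_mk.continuous).comp
    isProperMap_coneCoords.continuous

theorem isProperMap_prodConeMk [CompactSpace X] [CompactSpace Y] :
    IsProperMap (prodConeMk (X := X) (Y := Y)) :=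
  (OpenCone.isProperMap_mk.prodMap OpenCone.isProperMap_mk).comp isProperMap_coneCoords

theorem surjective_prodConeMk : Surjective (prodConeMk (X := X) (Y := Y)) :=
  (OpenCone.isQuotientMap_mk.surjective.prodMap OpenCone.isQuotientMap_mk.surjective).comp
    surjective_coneCoords

theorem continuous_joinConeMk : Continuous (joinConeMk (X := X) (Y := Y)) :=
  OpenCone.isQuotientMap_mk.continuous.comp
    ((continuous_quot_mk.comp continuous_fst).prodMk continuous_snd)

theorem surjective_joinConeMk : Surjective (joinConeMk (X := X) (Y := Y)) := by
  rintro ⟨j, r⟩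
  induction j using Quot.ind with | mk a => exact ⟨(a, r), rfl⟩

def joinConeToProdCone : OpenCone (Join X Y) → OpenCone X × OpenCone Y :=
  Quot.lift
    (fun z => Quot.lift (fun a => prodConeMk (a, z.2))
      (fun _ _ h => prodConeMk_eq_prodConeMk_iff.2
        (congrArg (fun j => OpenCone.mk (j, z.2)) (Quot.sound h))) z.1)
    (by
      rintro ⟨j, r⟩ ⟨j', r'⟩ h
      induction j using Quot.ind
      induction j' using Quot.ind
      exact prodConeMk_eq_prodConeMk_iff.2 (Quot.sound h))

theorem continuous_joinConeToProdCone : Continuous (joinConeToProdCone (X := X) (Y := Y)) := by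
  -- a quotient map times a locally compact space is again a quotient map
  have := (isLocallyClosed_Ico (a := (0 : ℝ)) (b := 1)).locallyCompactSpace
  exact isQuotientMap_quot_mk.continuous_iff.2
    (isQuotientMap_quot_mk.continuous_lift_prod_left continuous_prodConeMk)

end JoinCone

/-- The product of the open cones over compact spaces X and Y is homeomorphic to the open cone
over their join: cX × cY ≃ c(X ⋆ Y). -/
theorem cone_prod_cone_homeo_cone_join (X Y : Type*) [TopologicalSpace X] [TopologicalSpace Y]
    [CompactSpace X] [CompactSpace Y] :
    Nonempty ((OpenCone X × OpenCone Y) ≃ₜ OpenCone (Join X Y)) :=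
  ⟨(isProperMap_prodConeMk.isHomeomorph_of_comp_eq surjective_prodConeMk continuous_joinConeMk
    surjective_joinConeMk (fun _ _ => prodConeMk_eq_prodConeMk_iff.1)
    continuous_joinConeToProdCone fun _ => rfl).homeomorph.symm⟩
end
end
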